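/- arXiv:2402.17444 — 3 statements merged into one kernel-verified Lean document; each statement's English description precedes it below -/
import Mathlib

section
/- Let d ≥ 2 be an integer and define U^(d)(r) := U(r) − (d−2)·∫_1^∞ U(t·r)·t^{1−d} dt for r > 0. Then U^(d) admits the closed piecewise form: for 0 < r ≤ 1, U^(d)(r) = (r^{d−2}/π)·∫_1^∞ t^{1−d}/√(t²−1) dt, and for r > 1, U^(d)(r) = (1/π)·∫_1^∞ t^{1−d}/√(r²t²−1) dt. -/
/-!
For `s ≥ 1` the profile is `U s = arcsin (1 / s) / π`; hence `U` is continuous, `0 ≤ U s ≤ 1 / (2 s)`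
(Jordan's inequality), and `t ↦ U (t r)` has derivative `-(π t √(r²t² - 1))⁻¹` wherever `t r > 1`.
Integrating `t ↦ U (t r) t^(2-d)`, which tends to `0`, by parts over `(max 1 r⁻¹, ∞)`, and using that
`U (t r) = 1/2` on `(1, r⁻¹]`, gives `U^(d)(r) = π⁻¹ ∫_{max 1 r⁻¹}^∞ t^(1-d) / √(r²t² - 1) dt`
for every `d ≥ 2`. For `r ≤ 1` the substitution `t ↦ t / r` turns this into the stated form.
-/

open MeasureTheory Filter

/-- The limiting profile `U`. -/
noncomputable def U (r : ℝ) : ℝ :=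
  if r ≤ 1 then 1 / 2 else 1 / 2 - Real.arccos (1 / r) / Real.pi

/-- The `d`-dimensional profile `U^(d)`. -/
noncomputable def Ud (d : ℕ) (r : ℝ) : ℝ :=
  U r - ((d : ℝ) - 2) * ∫ t in Set.Ioi (1:ℝ), U (t * r) * t ^ ((1:ℝ) - d)

open Set Real Topology

variable {r s t a e : ℝ}

lemma U_of_le_one (hs : s ≤ 1) : U s = 1 / 2 := if_pos hs

lemma U_eq_arcsin (s : ℝ) : U s = arcsin (max s 1)⁻¹ / π := by
  rcases le_or_gt s 1 with hs | hs
  · rw [U_of_le_one hs, max_eq_right hs, inv_one, arcsin_one]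
    field_simp
  · rw [U, if_neg hs.not_ge, max_eq_left hs.le, arccos_eq_pi_div_two_sub_arcsin, one_div]
    field_simp
    ring

lemma continuous_U : Continuous U := by
  rw [show U = fun s => arcsin (max s 1)⁻¹ / π from funext U_eq_arcsin]
  exact (continuous_arcsin.comp ((continuous_id.max continuous_const).inv₀
    fun s => (zero_lt_one.trans_le (le_max_right s 1)).ne')).div_const π

lemma U_nonneg (s : ℝ) : 0 ≤ U s := by
  rw [U_eq_arcsin]
  exact div_nonneg (arcsin_nonneg.2 (inv_nonneg.2 (zero_le_one.trans (le_max_right s 1))))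
    pi_pos.le

lemma U_le_inv (hs : 0 < s) : U s ≤ (2 * s)⁻¹ := by
  set x := (max s 1)⁻¹
  have hx0 : 0 ≤ x := inv_nonneg.2 (zero_le_one.trans (le_max_right s 1))
  have hxs : x ≤ s⁻¹ := inv_anti₀ hs (le_max_left s 1)
  have hx1 : x ≤ 1 := inv_le_one_of_one_le₀ (le_max_right s 1)
  -- Jordan's inequality `2θ/π ≤ sin θ` at `θ = arcsin x`
  have jordan := mul_le_sin (arcsin_nonneg.2 hx0) (arcsin_le_pi_div_two x)
  rw [sin_arcsin (by linarith) hx1] at jordan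
  calc U s = arcsin x / π := U_eq_arcsin s
    _ ≤ x / 2 := by
      rw [div_le_iff₀ pi_pos]
      rw [div_mul_eq_mul_div, div_le_iff₀ pi_pos] at jordan
      linarith
    _ ≤ (2 * s)⁻¹ := by rw [mul_inv, div_eq_mul_inv, mul_comm]; linarith

lemma tendsto_U_atTop : Tendsto U atTop (𝓝 0) := by
  have h : Tendsto (fun s : ℝ => (2 * s)⁻¹) atTop (𝓝 0) :=
    tendsto_inv_atTop_zero.comp (tendsto_id.const_mul_atTop two_pos)
  refine tendsto_of_tendsto_of_tendsto_of_le_of_le' tendsto_const_nhds h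
    (Eventually.of_forall U_nonneg) ?_
  filter_upwards [eventually_gt_atTop 0] with s hs using U_le_inv hs

lemma hasDerivAt_U (hs : 1 < s) : HasDerivAt U (-(π * s * √(s ^ 2 - 1))⁻¹) s := by
  have hs0 : 0 < s := one_pos.trans hs
  have hU : (fun x => arcsin x⁻¹ / π) =ᶠ[𝓝 s] U := by
    filter_upwards [lt_mem_nhds hs] with x hx
    rw [U_eq_arcsin, max_eq_left hx.le]
  have hinv : s⁻¹ < 1 := inv_lt_one_of_one_lt₀ hs
  have hsqrt : √(1 - s⁻¹ ^ 2) = √(s ^ 2 - 1) / s := by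
    rw [show 1 - s⁻¹ ^ 2 = (s ^ 2 - 1) / s ^ 2 by field_simp, sqrt_div' _ (sq_nonneg s),
      sqrt_sq hs0.le]
  refine ((((hasDerivAt_arcsin (by linarith [inv_pos.2 hs0]) hinv.ne).comp s
    (hasDerivAt_inv hs0.ne')).div_const π).congr_of_eventuallyEq hU.symm).congr_deriv ?_
  rw [hsqrt]
  field_simp

lemma integrableOn_U_mul_rpow (hr : 0 < r) (ha : 0 < a) (he : 1 < e) :
    IntegrableOn (fun t => U (t * r) * t ^ (1 - e)) (Ioi a) := by
  refine Integrable.mono'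
    ((integrableOn_Ioi_rpow_of_lt (show -e < -1 by linarith) ha).const_mul (2 * r)⁻¹)
    ((continuous_U.measurable.comp (measurable_id.mul_const r)).mul
      (measurable_id.pow_const _)).aestronglyMeasurable ?_
  filter_upwards [ae_restrict_mem measurableSet_Ioi] with t ht
  have ht0 : 0 < t := ha.trans ht
  rw [norm_mul, norm_of_nonneg (U_nonneg _), norm_of_nonneg (rpow_nonneg ht0.le _)]
  calc U (t * r) * t ^ (1 - e) ≤ (2 * (t * r))⁻¹ * t ^ (1 - e) := by
        gcongr
        exact U_le_inv (by positivity)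
    _ = (2 * r)⁻¹ * t ^ (-e) := by
        rw [show 1 - e = -e + 1 by ring, rpow_add_one ht0.ne']
        field_simp

lemma hasDerivAt_U_mul_rpow (hr : 0 < r) (htr : 1 < t * r) :
    HasDerivAt (fun t => U (t * r) * t ^ (2 - e))
      (-π⁻¹ * (t ^ (1 - e) / √(r ^ 2 * t ^ 2 - 1)) + (2 - e) * (U (t * r) * t ^ (1 - e))) t := by
  have ht : 0 < t := by nlinarith
  refine (((hasDerivAt_U htr).comp t ((hasDerivAt_id t).mul_const r)).mul
    (hasDerivAt_rpow_const (Or.inl ht.ne'))).congr_deriv ?_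
  simp only [id, Function.comp_apply]
  rw [show 2 - e - 1 = 1 - e by ring, show (2:ℝ) - e = 1 - e + 1 by ring,
    rpow_add_one ht.ne', show (t * r) ^ 2 = r ^ 2 * t ^ 2 by ring]
  field_simp

lemma tendsto_U_mul_rpow_atTop (hr : 0 < r) (he : 2 ≤ e) :
    Tendsto (fun t => U (t * r) * t ^ (2 - e)) atTop (𝓝 0) := by
  refine tendsto_of_tendsto_of_tendsto_of_le_of_le' tendsto_const_nhds
    (tendsto_U_atTop.comp (tendsto_id.atTop_mul_const hr)) ?_ ?_
  · filter_upwards [eventually_gt_atTop 0] with t ht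
    exact mul_nonneg (U_nonneg _) (rpow_nonneg ht.le _)
  · filter_upwards [eventually_ge_atTop 1] with t ht
    exact mul_le_of_le_one_right (U_nonneg _) (rpow_le_one_of_one_le_of_nonpos ht (by linarith))

lemma sub_two_mul_integral_Ioi (he : 2 ≤ e) (hr : 0 < r) (ha : 0 < a) (har : 1 ≤ a * r) :
    (e - 2) * ∫ t in Ioi a, U (t * r) * t ^ (1 - e) =
      U (a * r) * a ^ (2 - e) - π⁻¹ * ∫ t in Ioi a, t ^ (1 - e) / √(r ^ 2 * t ^ 2 - 1) := by
  set w : ℝ → ℝ := fun t => t ^ (1 - e) / √(r ^ 2 * t ^ 2 - 1)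
  set F' : ℝ → ℝ := fun t => -π⁻¹ * w t + (2 - e) * (U (t * r) * t ^ (1 - e))
  have hderiv : ∀ t ∈ Ioi a, HasDerivAt (fun t => U (t * r) * t ^ (2 - e)) (F' t) t :=
    fun t ht => hasDerivAt_U_mul_rpow hr (har.trans_lt (mul_lt_mul_of_pos_right ht hr))
  -- `F' ≤ 0` makes `F'`, and with it `w`, integrable without estimating `w` near `a`.
  have hF'_nonpos : ∀ t ∈ Ioi a, F' t ≤ 0 := by
    intro t ht
    have ht0 : 0 < t := ha.trans ht
    have hw : 0 ≤ π⁻¹ * w t := by positivity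
    have hU : 0 ≤ U (t * r) * t ^ (1 - e) := mul_nonneg (U_nonneg _) (by positivity)
    nlinarith
  have hcont : ContinuousWithinAt (fun t => U (t * r) * t ^ (2 - e)) (Ici a) a :=
    ((continuous_U.comp (continuous_mul_const r)).continuousAt.mul
      (continuousAt_rpow_const _ _ (Or.inl ha.ne'))).continuousWithinAt
  have hlim := tendsto_U_mul_rpow_atTop hr he
  have hU := integrableOn_U_mul_rpow hr ha (by linarith : 1 < e)
  have hw : IntegrableOn w (Ioi a) := by
    refine IntegrableOn.congr_fun (((integrableOn_Ioi_deriv_of_nonpos hcont hderiv hF'_nonpos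
      hlim).sub (hU.const_mul (2 - e))).const_mul (-π)) (fun t _ => ?_) measurableSet_Ioi
    simp only [F', Pi.sub_apply]
    field_simp
    ring
  have hFTC := integral_Ioi_of_hasDerivAt_of_nonpos hcont hderiv hF'_nonpos hlim
  rw [integral_add (hw.const_mul _) (hU.const_mul _), integral_const_mul,
    integral_const_mul] at hFTC
  linarith

lemma sub_two_mul_integral_Ioc {b : ℝ} (hr : 0 ≤ r) (ha : 0 < a) (hab : a ≤ b) (hbr : b * r ≤ 1) :
    (e - 2) * ∫ t in Ioc a b, U (t * r) * t ^ (1 - e) = (a ^ (2 - e) - b ^ (2 - e)) / 2 := by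
  have hU : ∀ t ∈ Ioc a b, U (t * r) * t ^ (1 - e) = 1 / 2 * t ^ (1 - e) := fun t ht => by
    rw [U_of_le_one ((mul_le_mul_of_nonneg_right ht.2 hr).trans hbr)]
  have hpos : ∀ t ∈ uIcc a b, 0 < t := fun t ht => ha.trans_le (uIcc_of_le hab ▸ ht).1
  rw [setIntegral_congr_fun measurableSet_Ioc hU, ← intervalIntegral.integral_of_le hab,
    ← intervalIntegral.integral_const_mul,
    intervalIntegral.integral_eq_sub_of_hasDerivAt (f := fun t => -t ^ (2 - e) / 2)]
  · ring
  · intro t ht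
    refine ((hasDerivAt_rpow_const (Or.inl (hpos t ht).ne')).neg.div_const 2).congr_deriv ?_
    rw [show 2 - e - 1 = 1 - e by ring]
    ring
  · exact (ContinuousOn.intervalIntegrable fun t ht =>
      (continuousAt_const.mul (continuousAt_const.mul
        (continuousAt_rpow_const _ _ (Or.inl (hpos t ht).ne')))).continuousWithinAt)

lemma integral_Ioi_inv_rpow_div_sqrt (hr : 0 < r) :
    ∫ t in Ioi r⁻¹, t ^ (1 - e) / √(r ^ 2 * t ^ 2 - 1) =
      r ^ (e - 2) * ∫ t in Ioi 1, t ^ (1 - e) / √(t ^ 2 - 1) := by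
  have h : ∀ t ∈ Ioi r⁻¹, t ^ (1 - e) / √(r ^ 2 * t ^ 2 - 1) =
      r ^ (e - 1) * ((r * t) ^ (1 - e) / √((r * t) ^ 2 - 1)) := fun t ht => by
    rw [mul_rpow hr.le ((inv_pos.2 hr).trans ht).le, mul_pow, ← mul_div_assoc, ← mul_assoc,
      ← rpow_add hr]
    simp
  rw [setIntegral_congr_fun measurableSet_Ioi h, integral_const_mul,
    integral_comp_mul_left_Ioi (fun s => s ^ (1 - e) / √(s ^ 2 - 1)) _ hr,
    mul_inv_cancel₀ hr.ne', smul_eq_mul, ← mul_assoc, ← rpow_neg_one r, ← rpow_add hr]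
  ring_nf

lemma Ud_eq_integral_Ioi_max {d : ℕ} (hd : 2 ≤ d) (hr : 0 < r) :
    Ud d r = π⁻¹ * ∫ t in Ioi (max 1 r⁻¹), t ^ (1 - (d : ℝ)) / √(r ^ 2 * t ^ 2 - 1) := by
  have he : (2 : ℝ) ≤ d := by exact_mod_cast hd
  rw [Ud]
  rcases le_or_gt r 1 with hr1 | hr1
  · have h1 : 1 ≤ r⁻¹ := (one_le_inv₀ hr).2 hr1
    have hinv : r⁻¹ * r = 1 := inv_mul_cancel₀ hr.ne'
    have hint := integrableOn_U_mul_rpow hr one_pos (by linarith : 1 < (d : ℝ))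
    rw [max_eq_right h1, ← Ioc_union_Ioi_eq_Ioi h1,
      setIntegral_union Ioc_disjoint_Ioi_same measurableSet_Ioi (hint.mono_set Ioc_subset_Ioi_self)
        (hint.mono_set (Ioi_subset_Ioi h1)), mul_add,
      sub_two_mul_integral_Ioc hr.le one_pos h1 hinv.le,
      sub_two_mul_integral_Ioi he hr (inv_pos.2 hr) hinv.ge, hinv, U_of_le_one le_rfl,
      U_of_le_one hr1, one_rpow]
    ring
  · rw [max_eq_left (inv_le_one_of_one_le₀ hr1.le),
      sub_two_mul_integral_Ioi he hr one_pos (by rw [one_mul]; exact hr1.le), one_mul, one_rpow,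
      mul_one]
    ring

theorem Ud_piecewise (d : ℕ) (hd : 2 ≤ d) (r : ℝ) :
    (0 < r → r ≤ 1 →
      Ud d r = (r ^ ((d : ℝ) - 2) / Real.pi) *
        ∫ t in Set.Ioi (1:ℝ), t ^ ((1:ℝ) - d) / Real.sqrt (t ^ 2 - 1)) ∧
    (1 < r →
      Ud d r = (1 / Real.pi) *
        ∫ t in Set.Ioi (1:ℝ), t ^ ((1:ℝ) - d) / Real.sqrt (r ^ 2 * t ^ 2 - 1)) := by
  refine ⟨fun hr0 hr1 => ?_, fun hr1 => ?_⟩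
  · rw [Ud_eq_integral_Ioi_max hd hr0, max_eq_right ((one_le_inv₀ hr0).2 hr1),
      integral_Ioi_inv_rpow_div_sqrt hr0]
    ring
  · rw [Ud_eq_integral_Ioi_max hd (one_pos.trans hr1), max_eq_left (inv_le_one_of_one_le₀ hr1.le)]
    ring
end

section
/- Define U^(3)(r) := U(r) − ∫_1^∞ U(t·r)·t^{−2} dt and W^(3)(r) := (1/(2π)) · r^{−3} · ∫_0^r U^(3)(t)·t dt for r > 0. Then: (i) U^(3)(r) = r/π for 0 < r ≤ 1 and U^(3)(r) = (r − √(r²−1))/π for r > 1; (ii) W^(3)(r) = 1/(6π²) for 0 < r ≤ 1 and W^(3)(r) = (1/(6π²))·(1 − (r²−1)^{3/2}/r³) for r > 1. -/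
open MeasureTheory Filter

/-- The dimension-3 profile `U^(3)`. -/
noncomputable def U3 (r : ℝ) : ℝ :=
  U r - ∫ t in Set.Ioi (1:ℝ), U (t * r) * t ^ (-2 : ℝ)

/-- The dimension-3 Shannon density profile `W^(3)`. -/
noncomputable def W3 (r : ℝ) : ℝ :=
  (1 / (2 * Real.pi)) * r ^ (-3 : ℝ) * ∫ t in (0:ℝ)..r, U3 t * t

/-!
Substituting `x = 1/t` turns the tail integral in `U3 r` into `∫₀¹ U(r/x) dx`, and
`U s = arcsin (1/s) / π` for every `s > 0`. As `x * arcsin x + √(1 - x²)` is an antiderivative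
of `arcsin`, this gives `U3 r = (r - √(r² - 1)) / π` for every `r > 0`, the square root vanishing
when `r ≤ 1`. Integrating `t * U3 t` against the antiderivative `(t³ - √(t² - 1)³) / 3` of
`t² - t √(t² - 1)` then gives `W3`.
-/

open Real Set

lemma hasDerivAt_mul_arcsin_add_sqrt {x : ℝ} (h₁ : x ≠ -1) (h₂ : x ≠ 1) :
    HasDerivAt (fun y => y * arcsin y + √(1 - y ^ 2)) (arcsin x) x := by
  have hsq : 1 - x ^ 2 ≠ 0 :=
    sub_ne_zero.2 fun h => (sq_eq_one_iff.1 h.symm).elim h₂ h₁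
  have h := ((hasDerivAt_id x).mul (hasDerivAt_arcsin h₁ h₂)).add
    (((hasDerivAt_pow 2 x).const_sub 1).sqrt hsq)
  refine h.congr_deriv ?_
  simp only [id, Nat.cast_ofNat]
  ring

/-- Mathlib's `arcsin` is constant outside `[-1, 1]` and `√` vanishes on negative numbers, so
this holds for all `a b`: the antiderivative only fails to be differentiable at `±1`. -/
lemma integral_arcsin (a b : ℝ) :
    ∫ x in a..b, arcsin x = (b * arcsin b + √(1 - b ^ 2)) - (a * arcsin a + √(1 - a ^ 2)) :=
  integral_eq_of_hasDerivAt_off_countable _ _ ((countable_singleton 1).insert (-1))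
    (by fun_prop)
    (fun x hx => hasDerivAt_mul_arcsin_add_sqrt (fun h => hx.2 (by simp [h]))
      (fun h => hx.2 (by simp [h])))
    (continuous_arcsin.intervalIntegrable _ _)

lemma hasDerivAt_sqrt_sq_sub_one_pow_three {x : ℝ} (h₁ : x ≠ -1) (h₂ : x ≠ 1) :
    HasDerivAt (fun y => √(y ^ 2 - 1) ^ 3) (3 * (x * √(x ^ 2 - 1))) x := by
  have hsq : x ^ 2 - 1 ≠ 0 :=
    sub_ne_zero.2 fun h => (sq_eq_one_iff.1 h).elim h₂ h₁
  have h := (((hasDerivAt_pow 2 x).sub_const 1).sqrt hsq).fun_pow 3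
  refine h.congr_deriv ?_
  rcases eq_or_ne √(x ^ 2 - 1) 0 with h0 | h0
  · simp [h0]
  · field_simp
    ring

lemma integral_mul_sqrt_sq_sub_one (a b : ℝ) :
    ∫ x in a..b, x * √(x ^ 2 - 1) = (√(b ^ 2 - 1) ^ 3 - √(a ^ 2 - 1) ^ 3) / 3 := by
  rw [eq_div_iff three_ne_zero, mul_comm, ← intervalIntegral.integral_const_mul]
  exact integral_eq_of_hasDerivAt_off_countable _ _ ((countable_singleton 1).insert (-1))
    (by fun_prop)
    (fun x hx => hasDerivAt_sqrt_sq_sub_one_pow_three (fun h => hx.2 (by simp [h]))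
      (fun h => hx.2 (by simp [h])))
    (by apply Continuous.intervalIntegrable; fun_prop)

lemma setIntegral_Ioi_mul_rpow_neg_two (g : ℝ → ℝ) {a : ℝ} (ha : 0 < a) :
    ∫ t in Ioi a, g t * t ^ (-2 : ℝ) = ∫ x in Ioo 0 a⁻¹, g x⁻¹ := by
  have himage : (·⁻¹) '' Ioo 0 a⁻¹ = Ioi a := by
    rw [image_inv_eq_inv, inv_Ioo_0_left (inv_pos.2 ha), inv_inv]
  rw [← himage, integral_image_eq_integral_abs_deriv_smul measurableSet_Ioo
    (fun x hx => (hasDerivAt_inv hx.1.ne').hasDerivWithinAt) inv_injective.injOn]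
  refine setIntegral_congr_fun measurableSet_Ioo fun x hx => ?_
  have hx0 := hx.1
  rw [smul_eq_mul, inv_rpow hx0.le, rpow_neg hx0.le, inv_inv, rpow_two, abs_neg,
    abs_of_pos (by positivity)]
  field_simp

lemma U_eq_arcsin_inv {s : ℝ} (hs : 0 < s) : U s = arcsin s⁻¹ / π := by
  unfold U
  split_ifs with h
  · rw [arcsin_of_one_le ((one_le_inv₀ hs).2 h)]
    field_simp
  · rw [one_div, arccos_eq_pi_div_two_sub_arcsin]
    field_simp
    ring

lemma U3_eq_of_pos {r : ℝ} (hr : 0 < r) : U3 r = (r - √(r ^ 2 - 1)) / π := by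
  have hU : ∀ x ∈ Ioo (0:ℝ) 1, U (x⁻¹ * r) = arcsin (x / r) / π := fun x hx => by
    rw [U_eq_arcsin_inv (mul_pos (inv_pos.2 hx.1) hr), mul_inv, inv_inv, ← div_eq_mul_inv]
  have hsqrt : r * √(1 - r⁻¹ ^ 2) = √(r ^ 2 - 1) := by
    rw [← sqrt_sq hr.le, ← sqrt_mul (sq_nonneg r), sqrt_sq hr.le]
    congr 1
    field_simp
  have htail : ∫ t in Ioi 1, U (t * r) * t ^ (-2 : ℝ) = r * (∫ x in (0:ℝ)..r⁻¹, arcsin x) / π := by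
    rw [setIntegral_Ioi_mul_rpow_neg_two _ one_pos, inv_one,
      setIntegral_congr_fun measurableSet_Ioo hU, ← integral_Ioc_eq_integral_Ioo,
      ← intervalIntegral.integral_of_le zero_le_one, intervalIntegral.integral_div,
      intervalIntegral.integral_comp_div _ hr.ne', zero_div, one_div, smul_eq_mul]
  rw [U3, htail, integral_arcsin, U_eq_arcsin_inv hr, ← hsqrt]
  simp only [arcsin_zero, mul_zero, zero_pow two_ne_zero, sub_zero, sqrt_one, zero_add]
  field_simp
  ring

lemma integral_U3_mul_self {r : ℝ} (hr : 0 ≤ r) :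
    ∫ t in (0:ℝ)..r, U3 t * t = (r ^ 3 - √(r ^ 2 - 1) ^ 3) / (3 * π) := by
  have heq : EqOn (fun t => U3 t * t) (fun t => (t ^ 2 - t * √(t ^ 2 - 1)) / π) (uIcc 0 r) := by
    intro t ht
    rcases (uIcc_of_le hr ▸ ht).1.eq_or_lt with h | h
    · simp [← h]
    · simp only [U3_eq_of_pos h]
      ring
  rw [intervalIntegral.integral_congr heq, intervalIntegral.integral_div,
    intervalIntegral.integral_sub (by apply Continuous.intervalIntegrable; fun_prop)
      (by apply Continuous.intervalIntegrable; fun_prop),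
    integral_pow, integral_mul_sqrt_sq_sub_one,
    sqrt_eq_zero_of_nonpos (by norm_num : (0:ℝ) ^ 2 - 1 ≤ 0)]
  push_cast
  ring

lemma W3_eq_of_pos {r : ℝ} (hr : 0 < r) :
    W3 r = (1 / (6 * π ^ 2)) * (1 - √(r ^ 2 - 1) ^ 3 / r ^ 3) := by
  rw [W3, integral_U3_mul_self hr.le, rpow_neg hr.le, rpow_ofNat]
  field_simp
  ring

theorem U3_W3_piecewise (r : ℝ) :
    (0 < r → r ≤ 1 → U3 r = r / Real.pi) ∧
    (1 < r → U3 r = (r - Real.sqrt (r ^ 2 - 1)) / Real.pi) ∧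
    (0 < r → r ≤ 1 → W3 r = 1 / (6 * Real.pi ^ 2)) ∧
    (1 < r →
      W3 r = (1 / (6 * Real.pi ^ 2)) * (1 - (r ^ 2 - 1) ^ ((3:ℝ)/2) / r ^ 3)) := by
  have hsqrt (h₀ : 0 < r) (h₁ : r ≤ 1) : √(r ^ 2 - 1) = 0 :=
    sqrt_eq_zero_of_nonpos (by nlinarith)
  refine ⟨fun h₀ h₁ => ?_, fun h => U3_eq_of_pos (by linarith), fun h₀ h₁ => ?_, fun h => ?_⟩
  · rw [U3_eq_of_pos h₀, hsqrt h₀ h₁, sub_zero]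
  · rw [W3_eq_of_pos h₀, hsqrt h₀ h₁]
    simp
  · rw [W3_eq_of_pos (by linarith), rpow_div_two_eq_sqrt _ (by nlinarith)]
    norm_cast
end

section
/- Let d ≥ 2 be an integer. Then the function r ↦ r^{2−d}·U^(d)(r) is constant on the interval (0,1] and strictly decreasing on the interval [1,∞). -/
open MeasureTheory Filter

lemma U_of_le {r : ℝ} (h : r ≤ 1) : U r = 1 / 2 := if_pos h

lemma U_of_one_le {r : ℝ} (h : 1 ≤ r) : U r = 1 / 2 - Real.arccos (1 / r) / Real.pi := by
  rcases lt_or_eq_of_le h with h' | h'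
  · rw [U, if_neg (not_le.mpr h')]
  · rw [← h', U, if_pos le_rfl]
    norm_num [Real.arccos_one]

lemma U_measurable : Measurable U := by
  unfold U
  refine Measurable.ite (measurableSet_le measurable_id measurable_const) measurable_const ?_
  exact measurable_const.sub
    ((Real.measurable_arccos.comp (measurable_const.div measurable_id)).div_const _)

lemma abs_U_le (r : ℝ) : |U r| ≤ 1 / 2 := by
  unfold U
  split_ifs with h
  · rw [abs_of_nonneg (by norm_num : (0:ℝ) ≤ 1/2)]
  · have h1 : 0 ≤ Real.arccos (1 / r) := Real.arccos_nonneg _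
    have h2 : Real.arccos (1 / r) ≤ Real.pi := Real.arccos_le_pi _
    have hπ : 0 < Real.pi := Real.pi_pos
    have h3 : Real.arccos (1 / r) / Real.pi ≤ 1 := by
      rw [div_le_one hπ]; exact h2
    have h4 : 0 ≤ Real.arccos (1 / r) / Real.pi := div_nonneg h1 hπ.le
    rw [abs_le]; constructor <;> linarith

lemma U_lt_U {r s : ℝ} (h1 : 1 ≤ r) (h : r < s) : U s < U r := by
  have hr0 : 0 < r := lt_of_lt_of_le one_pos h1
  have hs0 : 0 < s := hr0.trans h
  rw [U_of_one_le h1, U_of_one_le (h1.trans h.le)]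
  have hx : (1:ℝ) / s < 1 / r := one_div_lt_one_div_of_lt hr0 h
  have hmem1 : (1:ℝ) / s ∈ Set.Icc (-1:ℝ) 1 := by
    constructor
    · have : (0:ℝ) < 1 / s := by positivity
      linarith
    · rw [div_le_one hs0]; linarith
  have hmem2 : (1:ℝ) / r ∈ Set.Icc (-1:ℝ) 1 := by
    constructor
    · have : (0:ℝ) < 1 / r := by positivity
      linarith
    · rw [div_le_one hr0]; exact h1
  have harc : Real.arccos (1 / r) < Real.arccos (1 / s) :=
    Real.strictAntiOn_arccos hmem1 hmem2 hx
  have hπ : 0 < Real.pi := Real.pi_pos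
  have : Real.arccos (1 / r) / Real.pi < Real.arccos (1 / s) / Real.pi :=
    (div_lt_div_iff_of_pos_right hπ).mpr harc
  linarith

lemma U_le_U {r s : ℝ} (h1 : 1 ≤ r) (h : r ≤ s) : U s ≤ U r := by
  rcases eq_or_lt_of_le h with h' | h'
  · rw [h']
  · exact (U_lt_U h1 h').le

lemma cast_three_le {d : ℕ} (hd : 3 ≤ d) : (3:ℝ) ≤ (d:ℝ) := by exact_mod_cast hd

lemma int_rpow {d : ℕ} (hd : 3 ≤ d) {a b : ℝ} (ha : 0 < a) (hab : a ≤ b) :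
    ((d:ℝ) - 2) * ∫ u in Set.Ioc a b, u ^ ((1:ℝ) - d)
      = a ^ ((2:ℝ) - d) - b ^ ((2:ℝ) - d) := by
  have hd3 := cast_three_le hd
  have h1 : ∫ u in Set.Ioc a b, u ^ ((1:ℝ) - d) = ∫ u in a..b, u ^ ((1:ℝ) - d) :=
    (intervalIntegral.integral_of_le hab).symm
  rw [h1, integral_rpow (Or.inr ⟨by intro hc; linarith,
    by rw [Set.uIcc_of_le hab]; intro hmem; exact absurd hmem.1 (not_le.mpr ha)⟩)]
  have h3 : (1:ℝ) - (d:ℝ) + 1 = (2:ℝ) - d := by ring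
  rw [h3]
  have h2 : (2:ℝ) - (d:ℝ) ≠ 0 := by intro hc; linarith
  field_simp
  ring

lemma intOn_U {d : ℕ} (hd : 3 ≤ d) {c : ℝ} (hc : 0 < c) :
    IntegrableOn (fun u : ℝ => U u * u ^ ((1:ℝ) - d)) (Set.Ioi c) := by
  have hd3 := cast_three_le hd
  have he : (1:ℝ) - d < -1 := by linarith
  have h1 : IntegrableOn (fun u : ℝ => u ^ ((1:ℝ) - d)) (Set.Ioi c) :=
    integrableOn_Ioi_rpow_of_lt he hc
  have hmeas : AEStronglyMeasurable (fun u : ℝ => U u * u ^ ((1:ℝ) - d))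
      (volume.restrict (Set.Ioi c)) := by
    refine AEStronglyMeasurable.mul U_measurable.aestronglyMeasurable ?_
    refine ContinuousOn.aestronglyMeasurable (fun x hx => ?_) measurableSet_Ioi
    exact (Real.continuousAt_rpow_const x _
      (Or.inl (ne_of_gt (hc.trans hx)))).continuousWithinAt
  refine Integrable.mono (h1.const_mul (1/2 : ℝ)) hmeas ?_
  filter_upwards with u
  rw [norm_mul, norm_mul, Real.norm_eq_abs (U u)]
  have : ‖(1/2 : ℝ)‖ = 1/2 := by norm_num
  rw [this]
  exact mul_le_mul_of_nonneg_right (abs_U_le u) (norm_nonneg _)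

lemma subst_lemma {d : ℕ} (hd : 3 ≤ d) {r : ℝ} (hr : 0 < r) :
    ∫ t in Set.Ioi (1:ℝ), U (t * r) * t ^ ((1:ℝ) - d)
      = r ^ ((d:ℝ) - 2) * ∫ u in Set.Ioi r, U u * u ^ ((1:ℝ) - d) := by
  have step1 : Set.EqOn (fun t : ℝ => U (t * r) * t ^ ((1:ℝ) - d))
      (fun t : ℝ => r ^ ((d:ℝ) - 1) * (U (r * t) * (r * t) ^ ((1:ℝ) - d)))
      (Set.Ioi (1:ℝ)) := by
    intro t ht
    have ht0 : 0 < t := lt_trans one_pos ht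
    simp only
    rw [Real.mul_rpow hr.le ht0.le, mul_comm t r]
    have hpow : r ^ ((d:ℝ) - 1) * r ^ ((1:ℝ) - d) = 1 := by
      rw [← Real.rpow_add hr]
      norm_num
    linear_combination (-(U (r * t) * t ^ ((1:ℝ) - d))) * hpow
  rw [setIntegral_congr_fun measurableSet_Ioi step1, MeasureTheory.integral_const_mul,
    MeasureTheory.integral_comp_mul_left_Ioi (fun u => U u * u ^ ((1:ℝ) - d)) 1 hr,
    mul_one, smul_eq_mul, ← mul_assoc]
  congr 1
  rw [show r⁻¹ = r ^ (-1 : ℝ) from (Real.rpow_neg_one r).symm, ← Real.rpow_add hr]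
  congr 1
  ring

lemma f_eq {d : ℕ} (hd : 2 ≤ d) {r : ℝ} (hr : 0 < r) :
    r ^ ((2:ℝ) - d) * Ud d r
      = r ^ ((2:ℝ) - d) * U r
        - ((d:ℝ) - 2) * ∫ u in Set.Ioi r, U u * u ^ ((1:ℝ) - d) := by
  rcases eq_or_lt_of_le hd with h2 | h3
  · have hz : (d:ℝ) - 2 = 0 := by rw [← h2]; norm_num
    rw [Ud, hz]; ring
  · have hd3 : 3 ≤ d := h3
    rw [Ud, subst_lemma hd3 hr]
    have hrr : r ^ ((2:ℝ) - d) * r ^ ((d:ℝ) - 2) = 1 := by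
      rw [← Real.rpow_add hr]; norm_num
    linear_combination
      (-((d:ℝ) - 2) * (∫ u in Set.Ioi r, U u * u ^ ((1:ℝ) - d))) * hrr

lemma const_part {d : ℕ} (hd : 3 ≤ d) {r : ℝ} (hr : r ∈ Set.Ioc (0:ℝ) 1) :
    r ^ ((2:ℝ) - d) * Ud d r
      = 1 / 2 - ((d:ℝ) - 2) * ∫ u in Set.Ioi (1:ℝ), U u * u ^ ((1:ℝ) - d) := by
  obtain ⟨hr0, hr1⟩ := hr
  rw [f_eq (le_trans (by norm_num) hd) hr0, U_of_le hr1]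
  have int1 : IntegrableOn (fun u : ℝ => U u * u ^ ((1:ℝ) - d)) (Set.Ioc r 1) :=
    (intOn_U hd hr0).mono_set Set.Ioc_subset_Ioi_self
  have int2 : IntegrableOn (fun u : ℝ => U u * u ^ ((1:ℝ) - d)) (Set.Ioi 1) :=
    intOn_U hd one_pos
  have hsplit : ∫ u in Set.Ioi r, U u * u ^ ((1:ℝ) - d)
      = (∫ u in Set.Ioc r 1, U u * u ^ ((1:ℝ) - d))
        + ∫ u in Set.Ioi (1:ℝ), U u * u ^ ((1:ℝ) - d) := by
    rw [← Set.Ioc_union_Ioi_eq_Ioi hr1]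
    exact setIntegral_union (Set.Ioc_disjoint_Ioi le_rfl) measurableSet_Ioi int1 int2
  have hioc : ∫ u in Set.Ioc r 1, U u * u ^ ((1:ℝ) - d)
      = (1/2) * ∫ u in Set.Ioc r 1, u ^ ((1:ℝ) - d) := by
    rw [← MeasureTheory.integral_const_mul]
    refine setIntegral_congr_fun measurableSet_Ioc ?_
    intro u hu
    simp only
    rw [U_of_le hu.2]
  have hval : ((d:ℝ) - 2) * ∫ u in Set.Ioc r 1, u ^ ((1:ℝ) - d)
      = r ^ ((2:ℝ) - d) - 1 := by
    rw [int_rpow hd hr0 hr1, Real.one_rpow]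
  rw [hsplit, hioc]
  linarith [hval]

theorem Ud_const_and_strictAnti (d : ℕ) (hd : 2 ≤ d) :
    (∀ r ∈ Set.Ioc (0:ℝ) 1, ∀ s ∈ Set.Ioc (0:ℝ) 1,
      r ^ ((2:ℝ) - d) * Ud d r = s ^ ((2:ℝ) - d) * Ud d s) ∧
    StrictAntiOn (fun r : ℝ => r ^ ((2:ℝ) - d) * Ud d r) (Set.Ici 1) := by
  rcases eq_or_lt_of_le hd with h2 | h3
  · subst h2
    have key : ∀ r : ℝ, r ^ ((2:ℝ) - (2:ℕ)) * Ud 2 r = U r := by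
      intro r
      have hz : (2:ℝ) - ((2:ℕ):ℝ) = 0 := by norm_num
      rw [Ud, hz, Real.rpow_zero]
      norm_num
    constructor
    · intro r hr s hs
      rw [key r, key s, U_of_le hr.2, U_of_le hs.2]
    · intro r hr s hs hrs
      simp only [key]
      exact U_lt_U hr hrs
  · have hd3 : 3 ≤ d := h3
    constructor
    · intro r hr s hs
      rw [const_part hd3 hr, const_part hd3 hs]
    · intro r hr s hs hrs
      simp only
      have hr1 : (1:ℝ) ≤ r := hr
      have hr0 : 0 < r := lt_of_lt_of_le one_pos hr1
      have hs0 : 0 < s := hr0.trans hrs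
      rw [f_eq hd hr0, f_eq hd hs0]
      have int1 : IntegrableOn (fun u : ℝ => U u * u ^ ((1:ℝ) - d)) (Set.Ioc r s) :=
        (intOn_U hd3 hr0).mono_set Set.Ioc_subset_Ioi_self
      have int2 : IntegrableOn (fun u : ℝ => U u * u ^ ((1:ℝ) - d)) (Set.Ioi s) :=
        intOn_U hd3 hs0
      have int3 : IntegrableOn (fun u : ℝ => U r * u ^ ((1:ℝ) - d)) (Set.Ioc r s) := by
        have he : (1:ℝ) - d < -1 := by have := cast_three_le hd3; linarith
        have h4 : IntegrableOn (fun u : ℝ => U r * u ^ ((1:ℝ) - d)) (Set.Ioi r) :=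
          (integrableOn_Ioi_rpow_of_lt he hr0).const_mul (U r)
        exact h4.mono_set Set.Ioc_subset_Ioi_self
      have hsplit : ∫ u in Set.Ioi r, U u * u ^ ((1:ℝ) - d)
          = (∫ u in Set.Ioc r s, U u * u ^ ((1:ℝ) - d))
            + ∫ u in Set.Ioi s, U u * u ^ ((1:ℝ) - d) := by
        rw [← Set.Ioc_union_Ioi_eq_Ioi hrs.le]
        exact setIntegral_union (Set.Ioc_disjoint_Ioi le_rfl) measurableSet_Ioi int1 int2
      have hmono : ∫ u in Set.Ioc r s, U u * u ^ ((1:ℝ) - d)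
          ≤ ∫ u in Set.Ioc r s, U r * u ^ ((1:ℝ) - d) := by
        refine setIntegral_mono_on int1 int3 measurableSet_Ioc ?_
        intro u hu
        exact mul_le_mul_of_nonneg_right (U_le_U hr1 hu.1.le)
          (Real.rpow_nonneg (le_of_lt (lt_trans hr0 hu.1)) _)
      have hconst : ∫ u in Set.Ioc r s, U r * u ^ ((1:ℝ) - d)
          = U r * ∫ u in Set.Ioc r s, u ^ ((1:ℝ) - d) := MeasureTheory.integral_const_mul _ _
      have hd2 : (0:ℝ) ≤ (d:ℝ) - 2 := by have := cast_three_le hd3; linarith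
      have hB : ((d:ℝ) - 2) * ∫ u in Set.Ioc r s, U u * u ^ ((1:ℝ) - d)
          ≤ U r * r ^ ((2:ℝ) - d) - U r * s ^ ((2:ℝ) - d) := by
        calc ((d:ℝ) - 2) * ∫ u in Set.Ioc r s, U u * u ^ ((1:ℝ) - d)
            ≤ ((d:ℝ) - 2) * (U r * ∫ u in Set.Ioc r s, u ^ ((1:ℝ) - d)) :=
              mul_le_mul_of_nonneg_left (hconst ▸ hmono) hd2
          _ = U r * (((d:ℝ) - 2) * ∫ u in Set.Ioc r s, u ^ ((1:ℝ) - d)) := by ring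
          _ = U r * (r ^ ((2:ℝ) - d) - s ^ ((2:ℝ) - d)) := by
              rw [int_rpow hd3 hr0 hrs.le]
          _ = U r * r ^ ((2:ℝ) - d) - U r * s ^ ((2:ℝ) - d) := by ring
      have hU : U s < U r := U_lt_U hr1 hrs
      have hs2 : (0:ℝ) < s ^ ((2:ℝ) - d) := Real.rpow_pos_of_pos hs0 _
      have hprod : s ^ ((2:ℝ) - d) * U s < s ^ ((2:ℝ) - d) * U r :=
        mul_lt_mul_of_pos_left hU hs2
      rw [hsplit]
      linarith
end
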